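/- arXiv:1711.03585 — 4 statements merged into one kernel-verified Lean document; each statement's English description precedes it below -/
import Mathlib

section
/- Let k > 0 and α ≤ β be real numbers, and let T_mono = {(2k) • u(θ) : θ ∈ [α, β]} and T_multi = {k • u(θ₁) + k • u(θ₂) : θ₁, θ₂ ∈ [α, β]} be subsets of ℝ². Then for every linear functional f : ℝ² → ℝ, the image f '' T_mono equals the image f '' T_multi. (In particular, the projections of the monostatic and multistatic k-space spectra onto any line l in the plane coincide.) -/
/-!
The projection `A = f '' (u '' [α, β])` of the arc is a continuous image of an interval, hence
convex. Projecting by `f` sends `T_mono` to `(2k) • A` and `T_multi` to `k • A + k • A`, and these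
agree because `A + A = 2 • A` for every convex set `A`.
-/

open Real Set

/-- The unit vector at angle `θ` in the Euclidean plane. -/
noncomputable def u (θ : ℝ) : EuclideanSpace ℝ (Fin 2) :=
  (WithLp.equiv 2 (Fin 2 → ℝ)).symm ![Real.cos θ, Real.sin θ]

open scoped Pointwise

theorem continuous_u : Continuous u :=
  (PiLp.continuous_toLp 2 _).comp <| continuous_pi <| Fin.forall_fin_two.2
    ⟨continuous_cos, continuous_sin⟩

theorem Convex.two_mul_smul {𝕜 E : Type*} [Field 𝕜] [LinearOrder 𝕜] [IsStrictOrderedRing 𝕜]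
    [AddCommGroup E] [Module 𝕜 E] {s : Set E} (hs : Convex 𝕜 s) (c : 𝕜) :
    (2 * c) • s = c • s + c • s := by
  rw [mul_comm, mul_smul, ← one_add_one_eq_two, hs.add_smul zero_le_one zero_le_one, one_smul,
    smul_add]

theorem proj_mono_eq_proj_multi_general (k α β : ℝ)
    (Tmono Tmulti : Set (EuclideanSpace ℝ (Fin 2)))
    (hmono : Tmono = {p | ∃ θ ∈ Set.Icc α β, p = (2 * k) • u θ})
    (hmulti : Tmulti = {p | ∃ θ₁ ∈ Set.Icc α β, ∃ θ₂ ∈ Set.Icc α β,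
      p = k • u θ₁ + k • u θ₂})
    (f : EuclideanSpace ℝ (Fin 2) →ₗ[ℝ] ℝ) :
    f '' Tmono = f '' Tmulti := by
  have hTmono : Tmono = (2 * k) • (u '' Icc α β) := by
    rw [hmono]
    ext p
    simp only [mem_ofPred_eq, ← image_smul, mem_image, eq_comm, ↓existsAndEq, and_true]
  have hTmulti : Tmulti = k • (u '' Icc α β) + k • (u '' Icc α β) := by
    rw [hmulti]
    ext p
    simp only [mem_ofPred_eq, ← image_smul, mem_add, mem_image, eq_comm, ↓existsAndEq, and_true]
  have hconv : Convex ℝ (f '' (u '' Icc α β)) := by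
    rw [image_image]
    exact (isPreconnected_Icc.image _
      (f.continuous_of_finiteDimensional.comp continuous_u).continuousOn).convex
  rw [hTmono, hTmulti, image_add, image_smul_set, image_smul_set, hconv.two_mul_smul]

/-- Projections of the monostatic and multistatic k-space spectra onto any line coincide. -/
theorem proj_mono_eq_proj_multi (k α β : ℝ) (hk : 0 < k) (hαβ : α ≤ β)
    (Tmono Tmulti : Set (EuclideanSpace ℝ (Fin 2)))
    (hmono : Tmono = {p | ∃ θ ∈ Set.Icc α β, p = (2 * k) • u θ})
    (hmulti : Tmulti = {p | ∃ θ₁ ∈ Set.Icc α β, ∃ θ₂ ∈ Set.Icc α β,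
      p = k • u θ₁ + k • u θ₂})
    (f : EuclideanSpace ℝ (Fin 2) →ₗ[ℝ] ℝ) :
    f '' Tmono = f '' Tmulti :=
  proj_mono_eq_proj_multi_general k α β Tmono Tmulti hmono hmulti f
end

section
/- Let D > 0, λ > 0, and L₁, L₂ > 0. Then ∫_{−L₂/2}^{L₂/2} (2/λ)·[ (x + L₁/2)/√(D² + (x + L₁/2)²) − (x − L₁/2)/√(D² + (x − L₁/2)²) ] dx = (4D/λ)·( √(1 + ((L₁ + L₂)/(2D))²) − √(1 + ((L₁ − L₂)/(2D))²) ); that is, the space-bandwidth product of the symmetric parallel-planes geometry G1 admits this closed form. -/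
/-!
The integrand is the derivative of `(2/λ)(√(D² + (x + L₁/2)²) − √(D² + (x − L₁/2)²))`, so the
fundamental theorem of calculus reduces the integral to four square roots. By evenness of
`t ↦ √(D² + t²)` they pair up into `√(D² + ((L₁ ± L₂)/2)²) = D √(1 + ((L₁ ± L₂)/(2D))²)`.
-/

open Real

section

variable {c : ℝ}

lemma hasDerivAt_sqrt_add_sq (hc : 0 < c) (x : ℝ) :
    HasDerivAt (fun y => √(c + y ^ 2)) (x / √(c + x ^ 2)) x := by
  have hpos : 0 < c + x ^ 2 := by positivity
  have hsq : HasDerivAt (fun y => c + y ^ 2) (2 * x) x := by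
    simpa using (hasDerivAt_pow 2 x).const_add c
  convert hsq.sqrt hpos.ne' using 1
  field_simp

lemma continuous_div_sqrt_add_sq (hc : 0 < c) : Continuous fun x : ℝ => x / √(c + x ^ 2) :=
  continuous_id.div (by fun_prop) fun x => (sqrt_pos.2 (by positivity)).ne'

lemma integral_div_sqrt_add_sq (hc : 0 < c) (a b : ℝ) :
    ∫ x in a..b, x / √(c + x ^ 2) = √(c + b ^ 2) - √(c + a ^ 2) :=
  intervalIntegral.integral_eq_sub_of_hasDerivAt (fun x _ => hasDerivAt_sqrt_add_sq hc x)
    ((continuous_div_sqrt_add_sq hc).intervalIntegrable _ _)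

end

lemma mul_sqrt_one_add_div_sq {D : ℝ} (hD : 0 < D) (s : ℝ) :
    D * √(1 + (s / D) ^ 2) = √(D ^ 2 + s ^ 2) := by
  have : D ^ 2 + s ^ 2 = D ^ 2 * (1 + (s / D) ^ 2) := by field_simp
  rw [this, sqrt_mul (sq_nonneg D), sqrt_sq hD.le]

theorem sbp_G1_general (D lam L₁ L₂ : ℝ) (hD : 0 < D) :
    ∫ x in (-L₂ / 2)..(L₂ / 2),
        (2 / lam) * ((x + L₁ / 2) / Real.sqrt (D ^ 2 + (x + L₁ / 2) ^ 2)
          - (x - L₁ / 2) / Real.sqrt (D ^ 2 + (x - L₁ / 2) ^ 2))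
      = (4 * D / lam) * (Real.sqrt (1 + ((L₁ + L₂) / (2 * D)) ^ 2)
          - Real.sqrt (1 + ((L₁ - L₂) / (2 * D)) ^ 2)) := by
  have hc : 0 < D ^ 2 := by positivity
  have hcont := continuous_div_sqrt_add_sq hc
  have hplus : IntervalIntegrable (fun x => (x + L₁ / 2) / √(D ^ 2 + (x + L₁ / 2) ^ 2))
      MeasureTheory.volume (-L₂ / 2) (L₂ / 2) :=
    (hcont.comp (continuous_id.add continuous_const)).intervalIntegrable _ _
  have hminus : IntervalIntegrable (fun x => (x - L₁ / 2) / √(D ^ 2 + (x - L₁ / 2) ^ 2))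
      MeasureTheory.volume (-L₂ / 2) (L₂ / 2) :=
    (hcont.comp (continuous_id.sub continuous_const)).intervalIntegrable _ _
  rw [intervalIntegral.integral_const_mul, intervalIntegral.integral_sub hplus hminus,
    intervalIntegral.integral_comp_add_right (fun x => x / √(D ^ 2 + x ^ 2)),
    intervalIntegral.integral_comp_sub_right (fun x => x / √(D ^ 2 + x ^ 2)),
    integral_div_sqrt_add_sq hc, integral_div_sqrt_add_sq hc]
  rw [show L₂ / 2 + L₁ / 2 = (L₁ + L₂) / 2 by ring, show -L₂ / 2 + L₁ / 2 = (L₁ - L₂) / 2 by ring,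
    show L₂ / 2 - L₁ / 2 = -((L₁ - L₂) / 2) by ring, show -L₂ / 2 - L₁ / 2 = -((L₁ + L₂) / 2) by ring,
    neg_sq, neg_sq, ← mul_sqrt_one_add_div_sq hD, ← mul_sqrt_one_add_div_sq hD,
    div_mul_eq_div_div, div_mul_eq_div_div]
  ring

/-- Closed form for the space-bandwidth product of the symmetric parallel-planes
geometry G1. -/
theorem sbp_G1 (D lam L₁ L₂ : ℝ) (hD : 0 < D) (hlam : 0 < lam)
    (hL₁ : 0 < L₁) (hL₂ : 0 < L₂) :
    ∫ x in (-L₂ / 2)..(L₂ / 2),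
        (2 / lam) * ((x + L₁ / 2) / Real.sqrt (D ^ 2 + (x + L₁ / 2) ^ 2)
          - (x - L₁ / 2) / Real.sqrt (D ^ 2 + (x - L₁ / 2) ^ 2))
      = (4 * D / lam) * (Real.sqrt (1 + ((L₁ + L₂) / (2 * D)) ^ 2)
          - Real.sqrt (1 + ((L₁ - L₂) / (2 * D)) ^ 2)) :=
  sbp_G1_general D lam L₁ L₂ hD
end

section
/- Let D > 0, λ > 0, and L₂ > 0 be fixed, and define F(L₁) = (4D/λ)·( √(1 + ((L₁ + L₂)/(2D))²) − √(1 + ((L₁ − L₂)/(2D))²) ) for L₁ ∈ ℝ. Then F(L₁) tends to 4L₂/λ as L₁ → ∞; i.e., the space-bandwidth product of the symmetric parallel-planes geometry with unbounded aperture tends to 4L₂/λ and does not increase indefinitely with aperture size. -/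
/-!
Multiplying by the conjugate, `√(a + y²) - y = a / (√(a + y²) + y) → 0` as `y → ∞`. Hence the
difference `√(a + (x + c)²) - √(a + (x - c)²)` behaves like `(x + c) - (x - c) = 2c`, and the
space-bandwidth product is `(4D/λ)` times this difference at `x = L₁/(2D)`, `c = L₂/(2D)`.
-/

open Real Filter Topology

theorem sqrt_add_sq_sub_self_eq_div {a y : ℝ} (ha : 0 ≤ a) (hy : 0 < y) :
    √(a + y ^ 2) - y = a / (√(a + y ^ 2) + y) := by
  have hpos : 0 < √(a + y ^ 2) + y := by positivity
  rw [eq_div_iff hpos.ne']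
  linear_combination sq_sqrt (by positivity : 0 ≤ a + y ^ 2)

theorem tendsto_sqrt_add_sq_sub_self_atTop {a : ℝ} (ha : 0 ≤ a) :
    Tendsto (fun y : ℝ => √(a + y ^ 2) - y) atTop (𝓝 0) := by
  have hden : Tendsto (fun y : ℝ => √(a + y ^ 2) + y) atTop atTop :=
    tendsto_atTop_add_left_of_le _ 0 (fun _ => sqrt_nonneg _) tendsto_id
  refine (hden.const_div_atTop a).congr' ?_
  filter_upwards [eventually_gt_atTop 0] with y hy
  exact (sqrt_add_sq_sub_self_eq_div ha hy).symm

theorem tendsto_sqrt_add_sq_add_sub_sqrt_add_sq_sub_atTop {a : ℝ} (ha : 0 ≤ a) (c : ℝ) :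
    Tendsto (fun x : ℝ => √(a + (x + c) ^ 2) - √(a + (x - c) ^ 2)) atTop (𝓝 (2 * c)) := by
  have hplus := (tendsto_sqrt_add_sq_sub_self_atTop ha).comp
    (tendsto_atTop_add_const_right _ c tendsto_id)
  have hminus := (tendsto_sqrt_add_sq_sub_self_atTop ha).comp
    (tendsto_atTop_add_const_right _ (-c) tendsto_id)
  convert (hplus.sub hminus).add_const (2 * c) using 1
  · ext x
    simp only [Function.comp_apply, id, ← sub_eq_add_neg]
    ring
  · simp

theorem sbp_G1_unbounded_aperture_general (D lam L₂ : ℝ) (hD : 0 < D) :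
    Tendsto (fun L₁ : ℝ =>
        (4 * D / lam) * (Real.sqrt (1 + ((L₁ + L₂) / (2 * D)) ^ 2)
          - Real.sqrt (1 + ((L₁ - L₂) / (2 * D)) ^ 2)))
      atTop (nhds (4 * L₂ / lam)) := by
  have hscale : Tendsto (fun L₁ : ℝ => L₁ / (2 * D)) atTop atTop :=
    tendsto_id.atTop_div_const (by positivity)
  have hdiff := ((tendsto_sqrt_add_sq_add_sub_sqrt_add_sq_sub_atTop zero_le_one
    (L₂ / (2 * D))).comp hscale).const_mul (4 * D / lam)
  convert hdiff using 2 with L₁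
  · simp only [Function.comp_apply, add_div, sub_div]
  · field_simp

/-- With unbounded aperture, the space-bandwidth product of the symmetric
parallel-planes geometry tends to `4 L₂ / λ`. -/
theorem sbp_G1_unbounded_aperture (D lam L₂ : ℝ) (hD : 0 < D) (hlam : 0 < lam)
    (hL₂ : 0 < L₂) :
    Tendsto (fun L₁ : ℝ =>
        (4 * D / lam) * (Real.sqrt (1 + ((L₁ + L₂) / (2 * D)) ^ 2)
          - Real.sqrt (1 + ((L₁ - L₂) / (2 * D)) ^ 2)))
      atTop (nhds (4 * L₂ / lam)) :=
  sbp_G1_unbounded_aperture_general D lam L₂ hD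
end

section
/- Let λ > 0 and L₁, L₂ > 0 be fixed, and for D > 0 define S(D) = (4D/λ)·( √(1 + ((L₁ + L₂)/(2D))²) − √(1 + ((L₁ − L₂)/(2D))²) ). Then D·S(D) tends to 2·L₁·L₂/λ as D → ∞; equivalently, in the far-field (Fresnel) regime D ≫ L₁, L₂ the space-bandwidth product of the symmetric parallel-planes geometry is asymptotic to the classical degrees-of-freedom count 2L₁L₂/(λD). -/
open Real Filter

/-!
Rationalising the difference of square roots,
`D² (√(1 + (a/D)²) - √(1 + (b/D)²)) = (a² - b²) / (√(1 + (a/D)²) + √(1 + (b/D)²))`,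
and the denominator tends to `2`. With `a = L₁ + L₂`, `b = L₁ - L₂` one has `a² - b² = 4 L₁ L₂`.
-/

lemma Real.sqrt_sub_sqrt_eq_div {u v : ℝ} (hu : 0 ≤ u) (hv : 0 ≤ v) (huv : √u + √v ≠ 0) :
    √u - √v = (u - v) / (√u + √v) := by
  rw [eq_div_iff huv]
  linear_combination Real.mul_self_sqrt hu - Real.mul_self_sqrt hv

lemma tendsto_sqrt_one_add_div_sq_atTop (a : ℝ) :
    Tendsto (fun x : ℝ => √(1 + (a / x) ^ 2)) atTop (nhds 1) := by
  have h : Tendsto (fun x : ℝ => 1 + (a / x) ^ 2) atTop (nhds (1 + 0 ^ 2)) :=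
    tendsto_const_nhds.add ((tendsto_const_nhds.div_atTop tendsto_id).pow 2)
  simpa using h.sqrt

lemma tendsto_sq_mul_sqrt_one_add_div_sq_sub_atTop (a b : ℝ) :
    Tendsto (fun x : ℝ => x ^ 2 * (√(1 + (a / x) ^ 2) - √(1 + (b / x) ^ 2)))
      atTop (nhds ((a ^ 2 - b ^ 2) / 2)) := by
  have hden : Tendsto (fun x : ℝ => √(1 + (a / x) ^ 2) + √(1 + (b / x) ^ 2))
      atTop (nhds 2) := by
    simpa [one_add_one_eq_two] using
      (tendsto_sqrt_one_add_div_sq_atTop a).add (tendsto_sqrt_one_add_div_sq_atTop b)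
  refine ((tendsto_const_nhds (x := a ^ 2 - b ^ 2)).div hden two_ne_zero).congr' ?_
  filter_upwards [eventually_ne_atTop 0] with x hx
  have hpos : 0 < √(1 + (a / x) ^ 2) + √(1 + (b / x) ^ 2) := by positivity
  rw [Pi.div_apply, Real.sqrt_sub_sqrt_eq_div (by positivity) (by positivity) hpos.ne',
    mul_div_assoc']
  congr 1
  field_simp
  ring

theorem sbp_G1_fresnel_limit_general (lam L₁ L₂ : ℝ) :
    Tendsto (fun D : ℝ =>
        D * ((4 * D / lam) * (Real.sqrt (1 + ((L₁ + L₂) / (2 * D)) ^ 2)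
          - Real.sqrt (1 + ((L₁ - L₂) / (2 * D)) ^ 2))))
      atTop (nhds (2 * L₁ * L₂ / lam)) := by
  have hval : 2 * L₁ * L₂ / lam = lam⁻¹ * (((L₁ + L₂) ^ 2 - (L₁ - L₂) ^ 2) / 2) := by ring
  rw [hval]
  refine (((tendsto_sq_mul_sqrt_one_add_div_sq_sub_atTop (L₁ + L₂) (L₁ - L₂)).comp
    (tendsto_id.const_mul_atTop two_pos)).const_mul lam⁻¹).congr fun D => ?_
  simp only [Function.comp_apply, id]
  ring

/-- In the far-field (Fresnel) regime, the space-bandwidth product of the symmetric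
parallel-planes geometry is asymptotic to the classical degrees-of-freedom count
`2 L₁ L₂ / (λ D)`. -/
theorem sbp_G1_fresnel_limit (lam L₁ L₂ : ℝ) (hlam : 0 < lam)
    (hL₁ : 0 < L₁) (hL₂ : 0 < L₂) :
    Tendsto (fun D : ℝ =>
        D * ((4 * D / lam) * (Real.sqrt (1 + ((L₁ + L₂) / (2 * D)) ^ 2)
          - Real.sqrt (1 + ((L₁ - L₂) / (2 * D)) ^ 2))))
      atTop (nhds (2 * L₁ * L₂ / lam)) :=
  sbp_G1_fresnel_limit_general lam L₁ L₂
end
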